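/- arXiv:1504.01960 — 2 statements merged into one kernel-verified Lean document; each statement's English description precedes it below -/
import Mathlib

section
/- Fix r ≥ 1 and let p(x) ∈ ℤ[x] be a monic polynomial dividing x^r − 1. Let G be a cyclic group of order r with generator σ acting on the free ℤ-module Λ = ℤ[x]/(p(x)) by letting σ act as multiplication by x. Then the group cohomology H¹(G, Λ) is cyclic of order |p(1)|, generated by the class of 1 ∈ ℤ[x]; in particular H¹(G, Λ) is trivial when p(1) = 0. -/
/-!
Write `Φ = 1 + X + ⋯ + X^(r-1)`. Since `(X - 1) Φ = X^r - 1 ≡ 0` in `Λ = ℤ[X]/(p)`, the image of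
`X - 1` lies in the kernel of `Φ`. Every `f ∈ Λ` is congruent to the integer `f(1)` modulo `X - 1`,
so every class of `H¹` is represented by an integer, and an integer `m` lies in `(X - 1)Λ` exactly
when `p(1) ∣ m` (evaluate at `1`).

If `p(1) ≠ 0`, then `p` is coprime to `X - 1` over `ℚ`, hence `p ∣ Φ` (divisibility by a monic
polynomial descends to `ℤ`); so `Φ` acts as `0` and `H¹ ≅ ℤ/p(1)`. If `p(1) = 0`, write
`p = (X - 1) p₁` and `Φ = p₁ u`; then `p ∣ Φ m` forces `u(1) m = 0`, while `p₁(1) u(1) = Φ(1) = r`,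
so `m = 0`.
-/

open Polynomial

namespace Polynomial

variable {R : Type*} [CommRing R]

theorem dvd_geom_sum_of_eval_one_ne_zero [IsDomain R] {p : R[X]} {r : ℕ} (hp : p.Monic)
    (hdvd : p ∣ X ^ r - 1) (h1 : p.eval 1 ≠ 0) : p ∣ ∑ i ∈ Finset.range r, X ^ i := by
  let ι := algebraMap R (FractionRing R)
  have hι : Function.Injective ι := IsFractionRing.injective R (FractionRing R)
  rw [← map_dvd_map ι hι hp]
  have hcop : IsCoprime (X - C 1) (p.map ι) := by
    rw [(irreducible_X_sub_C 1).coprime_iff_not_dvd, dvd_iff_isRoot, IsRoot, eval_one_map,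
      map_eq_zero_iff ι hι]
    exact h1
  refine hcop.symm.dvd_of_dvd_mul_left ?_
  simpa [Polynomial.map_sum, mul_geom_sum] using Polynomial.map_dvd ι hdvd

theorem eval_one_eq_zero_of_dvd_geom_sum_mul [IsDomain R] {p f : R[X]} {r : ℕ} (hp : p ≠ 0)
    (hdvd : p ∣ X ^ r - 1) (h1 : p.IsRoot 1) (hr : (r : R) ≠ 0)
    (h : p ∣ (∑ i ∈ Finset.range r, X ^ i) * f) : f.eval 1 = 0 := by
  obtain ⟨p₁, rfl⟩ := dvd_iff_isRoot.2 h1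
  obtain ⟨u, hu⟩ := hdvd
  obtain ⟨w, hw⟩ := h
  have hp₁ : p₁ ≠ 0 := right_ne_zero_of_mul hp
  have hgeom : ∑ i ∈ Finset.range r, X ^ i = p₁ * u := by
    refine mul_left_cancel₀ (X_sub_C_ne_zero 1) ?_
    rw [← mul_assoc, ← hu, C_1, mul_geom_sum]
  have huf : u * f = (X - C 1) * w := by
    refine mul_left_cancel₀ hp₁ ?_
    rw [← mul_assoc, ← hgeom, hw]
    ring
  have hu1 : u.eval 1 ≠ 0 := by
    intro hu1
    apply hr
    simpa [hu1] using congrArg (eval 1) hgeom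
  simpa [hu1] using congrArg (eval 1) huf

variable (p : R[X])

theorem mk_X_sub_one_dvd_mk_sub_mk_C_eval_one (f : R[X]) :
    Ideal.Quotient.mk (Ideal.span {p}) (X - 1) ∣
      Ideal.Quotient.mk (Ideal.span {p}) f - Ideal.Quotient.mk (Ideal.span {p}) (C (f.eval 1)) := by
  rw [← map_sub, ← C_1]
  exact _root_.map_dvd _ X_sub_C_dvd_sub_C_eval

theorem mk_X_sub_one_dvd_mk_C_iff (a : R) :
    Ideal.Quotient.mk (Ideal.span {p}) (X - 1) ∣ Ideal.Quotient.mk (Ideal.span {p}) (C a) ↔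
      p.eval 1 ∣ a := by
  constructor
  · rintro ⟨g, hg⟩
    obtain ⟨g, rfl⟩ := Ideal.Quotient.mk_surjective g
    rw [← map_mul, Ideal.Quotient.eq, Ideal.mem_span_singleton] at hg
    simpa using eval_dvd (x := 1) hg
  · rintro ⟨k, rfl⟩
    have hp1 : Ideal.Quotient.mk (Ideal.span {p}) (X - 1) ∣
        Ideal.Quotient.mk (Ideal.span {p}) (C (p.eval 1)) := by
      simpa [Ideal.Quotient.mk_singleton_self] using
        (mk_X_sub_one_dvd_mk_sub_mk_C_eval_one p p).neg_right
    rw [C_mul, map_mul]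
    exact dvd_mul_of_dvd_left hp1 _

end Polynomial

namespace CyclicQuotient

variable {R : Type*} [CommRing R] (p : R[X]) (r : ℕ)

noncomputable abbrev normHom : (R[X] ⧸ Ideal.span {p}) →+ (R[X] ⧸ Ideal.span {p}) :=
  AddMonoidHom.mulLeft (Ideal.Quotient.mk (Ideal.span {p}) (∑ i ∈ Finset.range r, X ^ i))

noncomputable abbrev xSubOneHom : (R[X] ⧸ Ideal.span {p}) →+ (R[X] ⧸ Ideal.span {p}) :=
  AddMonoidHom.mulLeft (Ideal.Quotient.mk (Ideal.span {p}) (X - 1))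

abbrev H1 := (normHom p r).ker ⧸ (xSubOneHom p).range.addSubgroupOf (normHom p r).ker

variable {p r}

theorem mem_range_xSubOneHom_iff {y : R[X] ⧸ Ideal.span {p}} :
    y ∈ (xSubOneHom p).range ↔ Ideal.Quotient.mk (Ideal.span {p}) (X - 1) ∣ y :=
  ⟨fun ⟨z, hz⟩ => ⟨z, hz.symm⟩, fun ⟨z, hz⟩ => ⟨z, hz.symm⟩⟩

theorem range_xSubOneHom_le_ker_normHom (hdvd : p ∣ X ^ r - 1) :
    (xSubOneHom p).range ≤ (normHom p r).ker := by
  rintro _ ⟨y, rfl⟩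
  change Ideal.Quotient.mk _ _ * (Ideal.Quotient.mk _ _ * y) = 0
  rw [← mul_assoc, ← map_mul, geom_sum_mul,
    Ideal.Quotient.eq_zero_iff_mem.2 (Ideal.mem_span_singleton.2 hdvd), zero_mul]

theorem H1.exists_eq_mk_C (hdvd : p ∣ X ^ r - 1) (q : H1 p r) :
    ∃ (a : R) (h : Ideal.Quotient.mk (Ideal.span {p}) (C a) ∈ (normHom p r).ker),
      q = QuotientAddGroup.mk ⟨_, h⟩ := by
  induction q using QuotientAddGroup.induction_on with | H x => ?_
  obtain ⟨f, hf⟩ := Ideal.Quotient.mk_surjective (x : R[X] ⧸ Ideal.span {p})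
  have hdiff : (x : R[X] ⧸ Ideal.span {p}) - Ideal.Quotient.mk _ (C (f.eval 1)) ∈
      (xSubOneHom p).range := by
    rw [mem_range_xSubOneHom_iff, ← hf]
    exact mk_X_sub_one_dvd_mk_sub_mk_C_eval_one p f
  have hmem : Ideal.Quotient.mk (Ideal.span {p}) (C (f.eval 1)) ∈ (normHom p r).ker := by
    simpa using sub_mem x.2 (range_xSubOneHom_le_ker_normHom hdvd hdiff)
  refine ⟨f.eval 1, hmem, ?_⟩
  rw [QuotientAddGroup.eq, AddSubgroup.mem_addSubgroupOf]
  simpa [neg_add_eq_sub] using neg_mem hdiff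

theorem H1.eq_zero_of_isRoot [IsDomain R] (hp : p ≠ 0) (hdvd : p ∣ X ^ r - 1) (h1 : p.IsRoot 1)
    (hr : (r : R) ≠ 0) (q : H1 p r) : q = 0 := by
  obtain ⟨a, ha, rfl⟩ := H1.exists_eq_mk_C hdvd q
  have ha : p ∣ (∑ i ∈ Finset.range r, X ^ i) * C a := by
    rwa [AddMonoidHom.mem_ker, AddMonoidHom.coe_mulLeft, ← map_mul,
      Ideal.Quotient.eq_zero_iff_mem, Ideal.mem_span_singleton] at ha
  obtain rfl : a = 0 := by simpa using eval_one_eq_zero_of_dvd_geom_sum_mul hp hdvd h1 hr ha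
  rw [QuotientAddGroup.eq_zero_iff, AddSubgroup.mem_addSubgroupOf]
  exact ⟨0, by simp⟩

theorem H1.card_eq_natAbs_eval_one {p : ℤ[X]} (hp : p.Monic) (hdvd : p ∣ X ^ r - 1)
    (h1 : p.eval 1 ≠ 0) : Nat.card (H1 p r) = (p.eval 1).natAbs := by
  have hker : ∀ y, y ∈ (normHom p r).ker := by
    intro y
    rw [AddMonoidHom.mem_ker, AddMonoidHom.coe_mulLeft, Ideal.Quotient.eq_zero_iff_mem.2
      (Ideal.mem_span_singleton.2 (dvd_geom_sum_of_eval_one_ne_zero hp hdvd h1)), zero_mul]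
  let φ : ℤ →+ H1 p r := (QuotientAddGroup.mk' _).comp
    ((Int.castAddHom (ℤ[X] ⧸ Ideal.span {p})).codRestrict _ fun m => hker _)
  have hsurj : Function.Surjective φ := by
    intro q
    obtain ⟨m, -, rfl⟩ := H1.exists_eq_mk_C hdvd q
    exact ⟨m, by simp [φ]⟩
  have hφker : φ.ker = AddSubgroup.zmultiples (p.eval 1) := by
    ext m
    rw [Int.mem_zmultiples_iff, ← mk_X_sub_one_dvd_mk_C_iff, ← mem_range_xSubOneHom_iff]
    simp [φ, QuotientAddGroup.eq_zero_iff, AddSubgroup.mem_addSubgroupOf]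
  rw [← Nat.card_congr (QuotientAddGroup.quotientKerEquivOfSurjective φ hsurj).toEquiv, hφker]
  exact Int.index_zmultiples _

end CyclicQuotient

/-- Let `p ∈ ℤ[x]` be monic dividing `x^r - 1`, and let a cyclic group of order `r`
act on `Λ = ℤ[x]/(p)` by multiplication by `x`.  Then
`H¹ = ker(1 + x + ⋯ + x^(r-1)) / im(x - 1)` is cyclic, generated by the class of `1`
(every class is represented by an integer), of order `|p(1)|`; in particular it is
trivial when `p(1) = 0`. -/
theorem stmt_3 (r : ℕ) (hr : 1 ≤ r) (p : Polynomial ℤ) (hmonic : p.Monic)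
    (hdvd : p ∣ Polynomial.X ^ r - 1) :
    ∀ N D : (Polynomial ℤ ⧸ Ideal.span {p}) →+ (Polynomial ℤ ⧸ Ideal.span {p}),
      N = AddMonoidHom.mulLeft
            (Ideal.Quotient.mk (Ideal.span {p}) (∑ i ∈ Finset.range r, Polynomial.X ^ i)) →
      D = AddMonoidHom.mulLeft (Ideal.Quotient.mk (Ideal.span {p}) (Polynomial.X - 1)) →
      (∀ q : N.ker ⧸ (D.range.addSubgroupOf N.ker),
          ∃ (m : ℤ) (h : ((m : Polynomial ℤ ⧸ Ideal.span {p})) ∈ N.ker),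
            q = QuotientAddGroup.mk ⟨(m : Polynomial ℤ ⧸ Ideal.span {p}), h⟩) ∧
      (p.eval 1 = 0 → ∀ q : N.ker ⧸ (D.range.addSubgroupOf N.ker), q = 0) ∧
      (p.eval 1 ≠ 0 →
        Nat.card (N.ker ⧸ (D.range.addSubgroupOf N.ker)) = (p.eval 1).natAbs) := by
  rintro N D rfl rfl
  refine ⟨fun q => ?_,
    fun h1 => CyclicQuotient.H1.eq_zero_of_isRoot hmonic.ne_zero hdvd h1 (by omega),
    CyclicQuotient.H1.card_eq_natAbs_eval_one hmonic hdvd⟩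
  obtain ⟨m, hm, rfl⟩ := CyclicQuotient.H1.exists_eq_mk_C hdvd q
  refine ⟨m, by simpa using hm, ?_⟩
  congr 2
end

section
/- Let Λ^∨ ⊆ Λ be free ℤ-modules of the same finite rank with an automorphism F of finite order preserving both, and let e ≥ 1. Let G = ⟨F⟩ and define B = image(H¹(G, Λ^∨) → H¹(G, Λ)). Then |(Λ/eΛ^∨)^F| = |(Λ/Λ^∨)^F| · |B[e]| · e^r, where r = rank(Λ^F). -/
/-!
Write `L = Λ'`, `I = im(F - 1)` and `K = ker N`. The fixed points of `F` on a finite quotient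
`Λ/P` are as many as the cokernel `Λ/(P + I)` of `F - 1`, and the `e`-torsion of the finite
group `B = (K ∩ L + I)/I` is as large as `B/eB`. So the claim is the index identity
`[Λ : eL + I] = [Λ : L + I] · [K ∩ L + I : I + e(K ∩ L + I)] · e^r`.

For `A ≤ W` in a free abelian group of finite rank, comparing `eW ≤ A + eW ≤ W` with
`eA ≤ A ∩ eW ≤ A` gives `[W : A + eW] · e^(rk A) = [e⁻¹A ∩ W : A] · e^(rk W)`. Apply this to
`I ∩ L ≤ L` and to `I ≤ K ∩ L + I`. Since `I ≤ K` and `K` is saturated, `e⁻¹I ≤ K`, and both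
correction indices equal `[e⁻¹I ∩ L : I ∩ L]`. Finally `I ∩ L`, `I` and `K ∩ L + I` all have
rank `rk Λ - r`, because `L` has finite index and `n` kills `K/I`.
-/

open Module

universe u

namespace LinearMap

section Ring

variable {R M : Type*} [Ring R] [AddCommGroup M] [Module R M]

theorem card_ker_eq_card_quotient_range [Finite M] (f : M →ₗ[R] M) :
    Nat.card (ker f) = Nat.card (M ⧸ range f) := by
  have hker := (ker f).card_eq_card_quotient_mul_card
  have hrange := (range f).card_eq_card_quotient_mul_card
  rw [Nat.card_congr f.quotKerEquivRange.toEquiv] at hker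
  exact Nat.eq_of_mul_eq_mul_right Nat.card_pos (by rw [← hker, hrange, mul_comm])

theorem mem_ker_of_nsmul_mem_ker {N : Type*} [AddCommGroup N] [Module R N] [IsTorsionFree ℤ N]
    {f : M →ₗ[R] N} {e : ℕ} (he : e ≠ 0) {x : M} (hx : e • x ∈ ker f) : x ∈ ker f := by
  rw [mem_ker, map_nsmul] at hx
  exact AddSubgroup.nsmulAddMonoidHom_injective_of_isTorsionFree he (by rw [map_zero]; exact hx)

variable {φ : Module.End R M} {n : ℕ}

theorem range_sub_id_le_ker_sum_pow (hφ : φ ^ n = 1) :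
    range (φ - id) ≤ ker (∑ i ∈ Finset.range n, φ ^ i) := by
  rintro _ ⟨x, rfl⟩
  rw [mem_ker, ← Module.End.one_eq_id, ← Module.End.mul_apply, geom_sum_mul, hφ, sub_self,
    zero_apply]

theorem nsmul_mem_range_sub_id_of_mem_ker_sum_pow {x : M}
    (hx : x ∈ ker (∑ i ∈ Finset.range n, φ ^ i)) : n • x ∈ range (φ - id) := by
  set y := (∑ i ∈ Finset.range n, ∑ j ∈ Finset.range i, φ ^ j) x
  have hy : (φ - 1) y = -(n • x) := by
    rw [← Module.End.mul_apply, Finset.mul_sum]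
    simp only [mul_geom_sum, Finset.sum_sub_distrib, Finset.sum_const, Finset.card_range,
      sub_apply, smul_apply, Module.End.one_apply, mem_ker.mp hx, zero_sub]
  exact ⟨-y, by rw [map_neg, ← Module.End.one_eq_id, hy, neg_neg]⟩

end Ring

theorem finrank_range_add_finrank_ker_of_hasRankNullity {R : Type*} {M : Type u} [Ring R]
    [AddCommGroup M] [Module R M] [HasRankNullity.{u} R] [StrongRankCondition R]
    [Module.Finite R M] (f : M →ₗ[R] M) :
    finrank R (range f) + finrank R (ker f) = finrank R M := by
  rw [← f.quotKerEquivRange.finrank_eq, (ker f).finrank_quotient_add_finrank]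

end LinearMap

theorem LinearEquiv.toLinearMap_pow_orderOf {R M : Type*} [Semiring R] [AddCommMonoid M]
    [Module R M] (F : M ≃ₗ[R] M) : (F : M →ₗ[R] M) ^ orderOf F = 1 := by
  have := congrArg LinearEquiv.automorphismGroup.toLinearMapMonoidHom (pow_orderOf_eq_one F)
  rwa [map_pow, map_one] at this

namespace Submodule

section Ring

variable {R M : Type*} [Ring R] [AddCommGroup M] [Module R M]

theorem card_ker_mapQ (P : Submodule R M) [Finite (M ⧸ P)] (g : M →ₗ[R] M)
    (h : P ≤ P.comap g) :
    Nat.card (LinearMap.ker (P.mapQ P g h)) = Nat.card (M ⧸ (P ⊔ LinearMap.range g)) := by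
  rw [LinearMap.card_ker_eq_card_quotient_range, range_mapQ]
  exact Nat.card_congr (P.quotientQuotientEquivQuotientSup _).toEquiv

theorem card_eqLocus_mapQ_id (P : Submodule R M) [Finite (M ⧸ P)] (φ : M →ₗ[R] M)
    (h : P ≤ P.comap φ) :
    Nat.card (LinearMap.eqLocus (P.mapQ P φ h) LinearMap.id) =
      (P ⊔ LinearMap.range (φ - LinearMap.id)).toAddSubgroup.index := by
  have hsub : P ≤ P.comap (φ - LinearMap.id) := fun x hx => P.sub_mem (h hx) hx
  have hmapQ : P.mapQ P φ h - LinearMap.id = P.mapQ P (φ - LinearMap.id) hsub := by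
    ext
    simp
  rw [LinearMap.eqLocus_eq_ker_sub, hmapQ, P.card_ker_mapQ]
  rfl

end Ring

theorem card_smul_eq_zero_quotient {R M : Type*} [CommRing R] [AddCommGroup M] [Module R M]
    {I W : Submodule R M} (hIW : I ≤ W) [Finite (W ⧸ I.comap W.subtype)] (e : R) :
    Nat.card {b : W ⧸ I.comap W.subtype // e • b = 0} =
      (I ⊔ W.map (e • LinearMap.id)).toAddSubgroup.relIndex W.toAddSubgroup := by
  set P := I.comap W.subtype
  have hP : P ≤ P.comap (e • LinearMap.id) := fun x hx => P.smul_mem e hx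
  have hmapQ : P.mapQ P (e • LinearMap.id) hP = e • LinearMap.id := by
    ext
    simp
  have htorsion : {b : W ⧸ P // e • b = 0} ≃ LinearMap.ker (P.mapQ P (e • LinearMap.id) hP) :=
    Equiv.subtypeEquivRight fun b => by simp [hmapQ]
  have hsmulW : W.map (e • LinearMap.id) ≤ LinearMap.range W.subtype := by
    rw [range_subtype]
    rintro _ ⟨x, hx, rfl⟩
    exact W.smul_mem e hx
  rw [Nat.card_congr htorsion, P.card_ker_mapQ]
  show _ = Nat.card (W ⧸ (I ⊔ W.map (e • LinearMap.id)).comap W.subtype)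
  rw [comap_sup_of_injective W.injective_subtype (by simpa using hIW) hsmulW]
  congr 3
  ext x
  simp [Subtype.ext_iff]

theorem toAddSubgroup_map_natCast_smul_id {M : Type*} [AddCommGroup M] (S : Submodule ℤ M)
    (e : ℕ) :
    (S.map ((e : ℤ) • LinearMap.id)).toAddSubgroup =
      S.toAddSubgroup.map (nsmulAddMonoidHom e) := by
  ext
  simp

end Submodule

namespace AddSubgroup

section AddCommGroup

variable {G : Type*} [AddCommGroup G]

theorem map_nsmulAddMonoidHom_le (S : AddSubgroup G) (e : ℕ) :
    S.map (nsmulAddMonoidHom e) ≤ S := by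
  rintro _ ⟨x, hx, rfl⟩
  exact S.nsmul_mem hx e

theorem index_sup_eq_relIndex_mul_index {X L : AddSubgroup G} (hXL : X ≤ L) (I : AddSubgroup G) :
    (X ⊔ I).index = (X ⊔ I ⊓ L).relIndex L * (L ⊔ I).index := by
  have hsup : L ⊔ I = L ⊔ (X ⊔ I) := by
    rw [← sup_assoc, sup_eq_left.mpr hXL]
  rw [← (X ⊔ I).relIndex_mul_index (sup_le_sup_right hXL I), hsup, relIndex_sup_right,
    ← inf_relIndex_right, sup_inf_assoc_of_le I hXL, ← hsup]

theorem relIndex_comap_inf_eq {L I K : AddSubgroup G} (f : G →+ G) (hL : L ≤ L.comap f)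
    (hI : I ≤ I.comap f) (hK : I.comap f ≤ K) :
    (I ⊓ L).relIndex ((I ⊓ L).comap f ⊓ L) = I.relIndex (I.comap f ⊓ (K ⊓ L ⊔ I)) := by
  have hleft : (I ⊓ L).comap f ⊓ L = I.comap f ⊓ L := by
    rw [comap_inf, inf_assoc, inf_eq_right.mpr hL]
  have hright : I.comap f ⊓ (K ⊓ L ⊔ I) = I.comap f ⊓ L ⊔ I := by
    rw [← inf_sup_assoc_of_le _ hI, ← inf_assoc, inf_eq_left.mpr hK]
  rw [hleft, hright, relIndex_sup_right, ← inf_relIndex_right, inf_assoc,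
    inf_eq_right.mpr inf_le_right, inf_relIndex_right]

end AddCommGroup

section FreeOfFiniteRank

variable {M : Type*} [AddCommGroup M] [Module.Free ℤ M] [Module.Finite ℤ M]

theorem relIndex_ne_zero_of_nsmul_mem {A B : AddSubgroup M} {n : ℕ} (hn : n ≠ 0)
    (h : ∀ x ∈ B, n • x ∈ A) : A.relIndex B ≠ 0 := by
  intro hAB
  have hle : B.map (nsmulAddMonoidHom n) ≤ A := by
    rintro _ ⟨x, hx, rfl⟩
    exact h x hx
  have := relIndex_eq_zero_of_le_left hle hAB
  rw [relIndex_map_nsmul] at this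
  exact pow_ne_zero _ hn this

theorem finrank_eq_of_nsmul_mem {A B : AddSubgroup M} (hAB : A ≤ B) {n : ℕ} (hn : n ≠ 0)
    (h : ∀ x ∈ B, n • x ∈ A) : finrank ℤ A = finrank ℤ B :=
  have : A.IsFiniteRelIndex B := ⟨relIndex_ne_zero_of_nsmul_mem hn h⟩
  have : Module.Finite ℤ B := (inferInstance : Module.Finite ℤ B.toIntSubmodule)
  have : IsTorsionFree ℤ B := (inferInstance : IsTorsionFree ℤ B.toIntSubmodule)
  finrank_eq_of_isFiniteRelIndex hAB

theorem relIndex_sup_map_nsmul_mul_pow {A W : AddSubgroup M} (hAW : A ≤ W) {e : ℕ}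
    (he : e ≠ 0) :
    (A ⊔ W.map (nsmulAddMonoidHom e)).relIndex W * e ^ finrank ℤ A =
      A.relIndex (A.comap (nsmulAddMonoidHom e) ⊓ W) * e ^ finrank ℤ W := by
  set f := nsmulAddMonoidHom (α := M) e
  have hmap_inf : W.map f ⊓ A = (A.comap f ⊓ W).map f := by
    ext x
    simp only [mem_inf, mem_map, mem_comap]
    constructor
    · rintro ⟨⟨w, hw, rfl⟩, hwA⟩
      exact ⟨w, ⟨hwA, hw⟩, rfl⟩
    · rintro ⟨w, ⟨hwA, hw⟩, rfl⟩
      exact ⟨⟨w, hw, rfl⟩, hwA⟩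
  have hW := (W.map f).relIndex_mul_relIndex (A ⊔ W.map f) W le_sup_right
    (sup_le hAW (W.map_nsmulAddMonoidHom_le e))
  have hA := (A.map f).relIndex_mul_relIndex (W.map f ⊓ A) A
    (le_inf (map_mono hAW) (A.map_nsmulAddMonoidHom_le e)) inf_le_right
  rw [relIndex_sup_right, relIndex_map_nsmul] at hW
  rw [inf_relIndex_right, relIndex_map_nsmul, hmap_inf,
    relIndex_map_map_of_injective _ _ (nsmulAddMonoidHom_injective_of_isTorsionFree he)] at hA
  rw [← hW, ← hA]
  ring

theorem relIndex_sup_map_nsmul_eq {L I K : AddSubgroup M} [L.FiniteIndex] {e n : ℕ}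
    (he : e ≠ 0) (hn : n ≠ 0) (hK : I.comap (nsmulAddMonoidHom e) ≤ K)
    (hnK : ∀ x ∈ K, n • x ∈ I) :
    (L.map (nsmulAddMonoidHom e) ⊔ I ⊓ L).relIndex L =
      (I ⊔ (K ⊓ L ⊔ I).map (nsmulAddMonoidHom e)).relIndex (K ⊓ L ⊔ I) *
        e ^ (finrank ℤ M - finrank ℤ I) := by
  have hIK : I ≤ K := le_trans (fun x hx => I.nsmul_mem hx e) hK
  have hrkL : finrank ℤ L = finrank ℤ M := finrank_eq_of_finiteIndex L
  have hrkC : finrank ℤ ↥(I ⊓ L) = finrank ℤ I :=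
    finrank_eq_of_nsmul_mem inf_le_left FiniteIndex.index_ne_zero
      fun x hx => ⟨I.nsmul_mem hx _, L.nsmul_index_mem x⟩
  have hrkKI : finrank ℤ ↥(K ⊓ L ⊔ I) = finrank ℤ I :=
    (finrank_eq_of_nsmul_mem le_sup_right hn fun x hx => hnK x (sup_le inf_le_left hIK hx)).symm
  have hrkI : finrank ℤ I ≤ finrank ℤ M := I.toIntSubmodule.finrank_le
  have hC := relIndex_sup_map_nsmul_mul_pow (inf_le_right : I ⊓ L ≤ L) he
  have hKI := relIndex_sup_map_nsmul_mul_pow (le_sup_right : I ≤ K ⊓ L ⊔ I) he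
  rw [relIndex_comap_inf_eq (nsmulAddMonoidHom (α := M) e) (fun x hx => L.nsmul_mem hx e)
    (fun x hx => I.nsmul_mem hx e) hK, hrkC, hrkL] at hC
  rw [hrkKI] at hKI
  rw [sup_comm, mul_right_cancel₀ (pow_ne_zero _ he) hKI]
  refine mul_right_cancel₀ (pow_ne_zero (finrank ℤ I) he) ?_
  rw [hC, mul_assoc, ← pow_add, Nat.sub_add_cancel hrkI]

end FreeOfFiniteRank

end AddSubgroup

namespace Submodule

variable {M : Type*} [AddCommGroup M] [Module.Free ℤ M] [Module.Finite ℤ M]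

theorem finite_quotient_map_natCast_smul_id (S : Submodule ℤ M) [Finite (M ⧸ S)] {e : ℕ}
    (he : e ≠ 0) : Finite (M ⧸ S.map ((e : ℤ) • LinearMap.id)) := by
  have : Finite (M ⧸ S.toAddSubgroup) := ‹_›
  have : S.toAddSubgroup.FiniteIndex := AddSubgroup.finiteIndex_of_finite_quotient
  have : (S.map ((e : ℤ) • LinearMap.id)).toAddSubgroup.FiniteIndex := by
    refine ⟨?_⟩
    rw [toAddSubgroup_map_natCast_smul_id, ← AddSubgroup.relIndex_mul_index
      (S.toAddSubgroup.map_nsmulAddMonoidHom_le e), AddSubgroup.relIndex_map_nsmul]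
    exact mul_ne_zero (pow_ne_zero _ he) AddSubgroup.FiniteIndex.index_ne_zero
  exact AddSubgroup.finite_quotient_of_finiteIndex

theorem finite_quotient_comap_subtype_of_nsmul_mem {I W : Submodule ℤ M} {n : ℕ} (hn : n ≠ 0)
    (h : ∀ x ∈ W, n • x ∈ I) : Finite (W ⧸ I.comap W.subtype) := by
  have hIW : I.toAddSubgroup.relIndex W.toAddSubgroup ≠ 0 :=
    AddSubgroup.relIndex_ne_zero_of_nsmul_mem hn h
  have : (I.comap W.subtype).toAddSubgroup.FiniteIndex := ⟨hIW⟩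
  exact AddSubgroup.finite_quotient_of_finiteIndex

end Submodule

theorem stmt_15_general {Λ : Type*} [AddCommGroup Λ] [Module.Free ℤ Λ] [Module.Finite ℤ Λ]
    (Λ' : Submodule ℤ Λ) (hfin : Finite (Λ ⧸ Λ'))
    (F : Λ ≃ₗ[ℤ] Λ) (n : ℕ) (hn : 0 < n) (hord : orderOf F = n)
    (e : ℕ) (he : 1 ≤ e)
    (h1 : Λ' ≤ Λ'.comap (F : Λ →ₗ[ℤ] Λ))
    (he1 : Submodule.map ((e : ℤ) • (LinearMap.id : Λ →ₗ[ℤ] Λ)) Λ' ≤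
      (Submodule.map ((e : ℤ) • (LinearMap.id : Λ →ₗ[ℤ] Λ)) Λ').comap (F : Λ →ₗ[ℤ] Λ)) :
    Nat.card
        ↥(LinearMap.eqLocus
            (Submodule.mapQ (Submodule.map ((e : ℤ) • (LinearMap.id : Λ →ₗ[ℤ] Λ)) Λ')
              (Submodule.map ((e : ℤ) • (LinearMap.id : Λ →ₗ[ℤ] Λ)) Λ')
              (F : Λ →ₗ[ℤ] Λ) he1)
            LinearMap.id) =
      Nat.card
          ↥(LinearMap.eqLocus (Submodule.mapQ Λ' Λ' (F : Λ →ₗ[ℤ] Λ) h1) LinearMap.id) *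
        Nat.card
          {b : ↥((LinearMap.ker (∑ i ∈ Finset.range n, ((F : Λ →ₗ[ℤ] Λ) ^ i)) ⊓ Λ') ⊔
                LinearMap.range ((F : Λ →ₗ[ℤ] Λ) - LinearMap.id)) ⧸
              Submodule.comap
                (((LinearMap.ker (∑ i ∈ Finset.range n, ((F : Λ →ₗ[ℤ] Λ) ^ i)) ⊓ Λ') ⊔
                    LinearMap.range ((F : Λ →ₗ[ℤ] Λ) - LinearMap.id)).subtype)
                (LinearMap.range ((F : Λ →ₗ[ℤ] Λ) - LinearMap.id)) //
            (e : ℤ) • b = 0} *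
        e ^ Module.finrank ℤ ↥(LinearMap.eqLocus (F : Λ →ₗ[ℤ] Λ) LinearMap.id) := by
  have hrank : finrank ℤ Λ - finrank ℤ (LinearMap.range ((F : Λ →ₗ[ℤ] Λ) - LinearMap.id)) =
      finrank ℤ (LinearMap.eqLocus (F : Λ →ₗ[ℤ] Λ) LinearMap.id) := by
    rw [LinearMap.eqLocus_eq_ker_sub, ← LinearMap.finrank_range_add_finrank_ker_of_hasRankNullity
      ((F : Λ →ₗ[ℤ] Λ) - LinearMap.id)]
    omega
  set I := LinearMap.range ((F : Λ →ₗ[ℤ] Λ) - LinearMap.id)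
  set K := LinearMap.ker (∑ i ∈ Finset.range n, (F : Λ →ₗ[ℤ] Λ) ^ i)
  set W := K ⊓ Λ' ⊔ I
  have he0 : e ≠ 0 := Nat.one_le_iff_ne_zero.mp he
  have hIK : I ≤ K := LinearMap.range_sub_id_le_ker_sum_pow (hord ▸ F.toLinearMap_pow_orderOf)
  have hnK : ∀ x ∈ K, n • x ∈ I := fun x hx =>
    LinearMap.nsmul_mem_range_sub_id_of_mem_ker_sum_pow hx
  have hK : I.toAddSubgroup.comap (nsmulAddMonoidHom e) ≤ K.toAddSubgroup := fun x hx =>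
    LinearMap.mem_ker_of_nsmul_mem_ker he0 (hIK hx)
  have : Finite (Λ ⧸ Λ'.map ((e : ℤ) • LinearMap.id)) :=
    Λ'.finite_quotient_map_natCast_smul_id he0
  have : Finite (W ⧸ I.comap W.subtype) :=
    Submodule.finite_quotient_comap_subtype_of_nsmul_mem hn.ne' fun x hx =>
      hnK x (sup_le inf_le_left hIK hx)
  have : Λ'.toAddSubgroup.FiniteIndex := @AddSubgroup.finiteIndex_of_finite_quotient _ _ _ hfin
  have hW : W.toAddSubgroup = K.toAddSubgroup ⊓ Λ'.toAddSubgroup ⊔ I.toAddSubgroup := by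
    rw [Submodule.sup_toAddSubgroup]
    rfl
  rw [Submodule.card_eqLocus_mapQ_id, Submodule.card_eqLocus_mapQ_id,
    Submodule.card_smul_eq_zero_quotient le_sup_right, hW, Submodule.sup_toAddSubgroup,
    Submodule.sup_toAddSubgroup, Submodule.sup_toAddSubgroup,
    Submodule.toAddSubgroup_map_natCast_smul_id, Submodule.toAddSubgroup_map_natCast_smul_id, hW,
    AddSubgroup.index_sup_eq_relIndex_mul_index (Λ'.toAddSubgroup.map_nsmulAddMonoidHom_le e),
    AddSubgroup.relIndex_sup_map_nsmul_eq he0 hn.ne' hK hnK]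
  rw [show finrank ℤ I.toAddSubgroup = finrank ℤ I from rfl, hrank]
  ring

/-- Betts–Dokchitser: let `Λ` be a free `ℤ`-module of finite rank, `Λ' ⊆ Λ` a
finite-index submodule, and `F` an automorphism of `Λ` of order `n` preserving `Λ'`.
With `G = ⟨F⟩`, let `B = im(H¹(G,Λ') → H¹(G,Λ))`, realised as the subquotient
`((ker N ⊓ Λ') ⊔ im(F-1)) / im(F-1)` where `N = Σ_{i<n} F^i`.  Then for `e ≥ 1`,
`|(Λ/eΛ')^F| = |(Λ/Λ')^F| · |B[e]| · e^r` with `r = rk Λ^F`.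
(The hypotheses `h1`, `he1` that `F` descends to the quotients are automatic from
`hF`.) -/
theorem stmt_15 {Λ : Type*} [AddCommGroup Λ] [Module.Free ℤ Λ] [Module.Finite ℤ Λ]
    (Λ' : Submodule ℤ Λ) (hfin : Finite (Λ ⧸ Λ'))
    (F : Λ ≃ₗ[ℤ] Λ) (n : ℕ) (hn : 0 < n) (hord : orderOf F = n)
    (e : ℕ) (he : 1 ≤ e)
    (hF : Submodule.map (F : Λ →ₗ[ℤ] Λ) Λ' = Λ')
    (h1 : Λ' ≤ Λ'.comap (F : Λ →ₗ[ℤ] Λ))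
    (he1 : Submodule.map ((e : ℤ) • (LinearMap.id : Λ →ₗ[ℤ] Λ)) Λ' ≤
      (Submodule.map ((e : ℤ) • (LinearMap.id : Λ →ₗ[ℤ] Λ)) Λ').comap (F : Λ →ₗ[ℤ] Λ)) :
    Nat.card
        ↥(LinearMap.eqLocus
            (Submodule.mapQ (Submodule.map ((e : ℤ) • (LinearMap.id : Λ →ₗ[ℤ] Λ)) Λ')
              (Submodule.map ((e : ℤ) • (LinearMap.id : Λ →ₗ[ℤ] Λ)) Λ')
              (F : Λ →ₗ[ℤ] Λ) he1)
            LinearMap.id) =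
      Nat.card
          ↥(LinearMap.eqLocus (Submodule.mapQ Λ' Λ' (F : Λ →ₗ[ℤ] Λ) h1) LinearMap.id) *
        Nat.card
          {b : ↥((LinearMap.ker (∑ i ∈ Finset.range n, ((F : Λ →ₗ[ℤ] Λ) ^ i)) ⊓ Λ') ⊔
                LinearMap.range ((F : Λ →ₗ[ℤ] Λ) - LinearMap.id)) ⧸
              Submodule.comap
                (((LinearMap.ker (∑ i ∈ Finset.range n, ((F : Λ →ₗ[ℤ] Λ) ^ i)) ⊓ Λ') ⊔
                    LinearMap.range ((F : Λ →ₗ[ℤ] Λ) - LinearMap.id)).subtype)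
                (LinearMap.range ((F : Λ →ₗ[ℤ] Λ) - LinearMap.id)) //
            (e : ℤ) • b = 0} *
        e ^ Module.finrank ℤ ↥(LinearMap.eqLocus (F : Λ →ₗ[ℤ] Λ) LinearMap.id) :=
  stmt_15_general Λ' hfin F n hn hord e he h1 he1
end
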